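/- arXiv:0908.2863 — 2 statements merged into one kernel-verified Lean document; each statement's English description precedes it below -/
import Mathlib

section
/- For every irreducible representation ρ : Γ → SL(2,ℂ) of the figure-eight knot group Γ = ⟨x, y | x y⁻¹ x⁻¹ y x y⁻¹ x y x⁻¹ y⁻¹⟩, with meridian m = x and longitude l = y x⁻¹ y⁻¹ x² y⁻¹ x⁻¹ y, one has trace(ρ(l)) = trace(ρ(m))⁴ − 5·trace(ρ(m))² + 2. -/
open Matrix

/-- The relator of the figure-eight knot group: x y⁻¹ x⁻¹ y x y⁻¹ x y x⁻¹ y⁻¹. -/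
def figEightRels : Set (FreeGroup (Fin 2)) :=
  { FreeGroup.of 0 * (FreeGroup.of 1)⁻¹ * (FreeGroup.of 0)⁻¹ * FreeGroup.of 1 *
    FreeGroup.of 0 * (FreeGroup.of 1)⁻¹ * FreeGroup.of 0 * FreeGroup.of 1 *
    (FreeGroup.of 0)⁻¹ * (FreeGroup.of 1)⁻¹ }

/-- The figure-eight knot group. -/
def FigEightGroup := PresentedGroup figEightRels

instance : Group FigEightGroup := by unfold FigEightGroup; infer_instance

/-- The meridian m = x. -/
def fig8m : FigEightGroup := PresentedGroup.of 0

/-- The longitude l = y x⁻¹ y⁻¹ x² y⁻¹ x⁻¹ y. -/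
def fig8l : FigEightGroup :=
  PresentedGroup.of 1 * (PresentedGroup.of 0)⁻¹ * (PresentedGroup.of 1)⁻¹ *
  PresentedGroup.of 0 * PresentedGroup.of 0 * (PresentedGroup.of 1)⁻¹ *
  (PresentedGroup.of 0)⁻¹ * PresentedGroup.of 1

/-!
The relator is `W⁻¹ x W y⁻¹` with `W = y⁻¹ x y x⁻¹`, so `A = ρ x` and `B = ρ y` are conjugate and
have the same trace `s + s⁻¹`. If they have no common eigenvector, an eigenvector `w` of `B` for `s⁻¹` and
`u = (A - s⁻¹) w` (an eigenvector of `A` for `s`, by Cayley–Hamilton) form a basis in which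
`A = !![s, 1; 0, s⁻¹]` and `B = !![s, 0; r, s⁻¹]`. In these coordinates the relation reduces to the
single Riley equation `r² + (t² - 5)(r - 1) = 0` with `t = s + s⁻¹`, and a direct computation gives
`tr ρ(l) = t⁴ - 5t² + 2 + (r + 1) t² (r² + (t² - 5)(r - 1))`.
-/

open scoped MatrixGroups

variable {K : Type*} [Field K]

open Polynomial in
theorem exists_add_inv_eq [IsAlgClosed K] (t : K) : ∃ s ≠ 0, s + s⁻¹ = t := by
  obtain ⟨s, hs⟩ := IsAlgClosed.exists_root (C 1 * X ^ 2 + C (-t) * X + C 1)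
    (by rw [degree_quadratic one_ne_zero]; decide)
  simp only [IsRoot, eval_add, eval_mul, eval_C, eval_pow, eval_X] at hs
  have hs0 : s ≠ 0 := by rintro rfl; simp at hs
  exact ⟨s, hs0, by field_simp; linear_combination hs⟩

theorem exists_mulVec_eq_smul_of_sq_sub_trace_mul_add_det (M : Matrix (Fin 2) (Fin 2) K) {μ : K}
    (hμ : μ ^ 2 - trace M * μ + det M = 0) : ∃ w ≠ 0, M *ᵥ w = μ • w := by
  have hdet : (M - μ • 1).det = 0 := by
    rw [det_fin_two, ← hμ, trace_fin_two, det_fin_two]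
    simp only [Matrix.sub_apply, Matrix.smul_apply, one_apply_eq, one_apply_ne zero_ne_one,
      one_apply_ne one_ne_zero, smul_eq_mul, mul_one, mul_zero, sub_zero]
    ring
  obtain ⟨w, hw, hMw⟩ := exists_mulVec_eq_zero_iff.mpr hdet
  refine ⟨w, hw, sub_eq_zero.mp ?_⟩
  rwa [sub_mulVec, smul_mulVec, one_mulVec] at hMw

theorem mulVec_mulVec_sub_smul (M : Matrix (Fin 2) (Fin 2) K) {a b : K} (hab : a + b = trace M)
    (hab' : a * b = det M) (w : Fin 2 → K) :
    M *ᵥ (M *ᵥ w - b • w) = a • (M *ᵥ w - b • w) := by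
  rw [trace_fin_two] at hab
  rw [det_fin_two] at hab'
  refine funext (Fin.forall_fin_two.mpr ⟨?_, ?_⟩) <;>
    simp only [mulVec, dotProduct, Fin.sum_univ_two, Pi.sub_apply, Pi.smul_apply, smul_eq_mul]
  · linear_combination -(M 0 0 * w 0 + M 0 1 * w 1) * hab + w 0 * hab'
  · linear_combination -(M 1 0 * w 0 + M 1 1 * w 1) * hab + w 1 * hab'

theorem exists_eq_smul_of_det_eq_zero {u w : Fin 2 → K} (hw : w ≠ 0)
    (h : u 0 * w 1 - u 1 * w 0 = 0) : ∃ c : K, u = c • w := by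
  simp only [funext_iff, Fin.forall_fin_two, Pi.smul_apply, smul_eq_mul]
  by_cases hw0 : w 0 = 0
  · have hw1 : w 1 ≠ 0 := fun hw1 => hw (funext (Fin.forall_fin_two.mpr ⟨hw0, hw1⟩))
    refine ⟨u 1 / w 1, ?_, by field_simp⟩
    field_simp
    simpa [hw0, hw1] using h
  · refine ⟨u 0 / w 0, by field_simp, ?_⟩
    field_simp
    linear_combination -h

section LineStabilizer

variable {n : Type*} [Fintype n] [DecidableEq n]

def lineStabilizer (v : n → K) : Subgroup (Matrix.SpecialLinearGroup n K) where
  carrier := {M | ∃ c : K, (M : Matrix n n K) *ᵥ v = c • v}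
  one_mem' := ⟨1, by simp⟩
  mul_mem' := by
    rintro M N ⟨a, ha⟩ ⟨b, hb⟩
    refine ⟨a * b, ?_⟩
    rw [Matrix.SpecialLinearGroup.coe_mul, ← mulVec_mulVec, hb, mulVec_smul, ha, smul_smul,
      mul_comm]
  inv_mem' := by
    rintro M ⟨c, hc⟩
    refine ⟨c⁻¹, ?_⟩
    have hv : v = c • ((M⁻¹ : Matrix.SpecialLinearGroup n K) : Matrix n n K) *ᵥ v := by
      rw [← mulVec_smul, ← hc, mulVec_mulVec, Matrix.SpecialLinearGroup.coe_inv, adjugate_mul,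
        M.2, one_smul, one_mulVec]
    rcases eq_or_ne c 0 with rfl | hc0
    · rw [zero_smul] at hv
      simp [hv]
    · conv_rhs => rw [hv]
      rw [smul_smul, inv_mul_cancel₀ hc0, one_smul]

end LineStabilizer

theorem trace_coe_inv_mul_mul {n R : Type*} [Fintype n] [DecidableEq n] [CommRing R]
    (g X : Matrix.SpecialLinearGroup n R) :
    trace ((g⁻¹ * X * g : Matrix.SpecialLinearGroup n R) : Matrix n n R) =
      trace (X : Matrix n n R) := by
  rw [Matrix.SpecialLinearGroup.coe_mul, Matrix.SpecialLinearGroup.coe_mul, trace_mul_cycle,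
    ← Matrix.SpecialLinearGroup.coe_mul, mul_inv_cancel, Matrix.SpecialLinearGroup.coe_one,
    one_mul]

theorem exists_conj_eq_normalForm_of_basis (A B : SL(2, K)) {s : K} (hs : s ≠ 0)
    {u w : Fin 2 → K} (huw : u 0 * w 1 - u 1 * w 0 = 1)
    (hAu : (A : Matrix (Fin 2) (Fin 2) K) *ᵥ u = s • u)
    (hAw : (A : Matrix (Fin 2) (Fin 2) K) *ᵥ w = u + s⁻¹ • w)
    (hBw : (B : Matrix (Fin 2) (Fin 2) K) *ᵥ w = s⁻¹ • w) :
    ∃ (g : SL(2, K)) (r : K),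
      ((g⁻¹ * A * g : SL(2, K)) : Matrix (Fin 2) (Fin 2) K) = !![s, 1; 0, s⁻¹] ∧
      ((g⁻¹ * B * g : SL(2, K)) : Matrix (Fin 2) (Fin 2) K) = !![s, 0; r, s⁻¹] := by
  obtain ⟨g, hg⟩ : ∃ g : SL(2, K), (g : Matrix (Fin 2) (Fin 2) K) = !![u 0, w 0; u 1, w 1] :=
    ⟨⟨_, by rw [det_fin_two_of]; linear_combination huw⟩, rfl⟩
  have hAu0 := congrFun hAu 0
  have hAu1 := congrFun hAu 1
  have hAw0 := congrFun hAw 0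
  have hAw1 := congrFun hAw 1
  have hBw0 := congrFun hBw 0
  have hBw1 := congrFun hBw 1
  simp only [mulVec, dotProduct, Fin.sum_univ_two, Pi.smul_apply, smul_eq_mul, Pi.add_apply]
    at hAu0 hAu1 hAw0 hAw1 hBw0 hBw1
  have hconj : ∀ X : SL(2, K), ((g⁻¹ * X * g : SL(2, K)) : Matrix (Fin 2) (Fin 2) K) =
      !![w 1, -w 0; -u 1, u 0] * !![X 0 0, X 0 1; X 1 0, X 1 1] * !![u 0, w 0; u 1, w 1] := by
    intro X
    rw [Matrix.SpecialLinearGroup.coe_mul, Matrix.SpecialLinearGroup.coe_mul,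
      Matrix.SpecialLinearGroup.coe_inv, hg, adjugate_fin_two_of, ← eta_fin_two]
  set N := ((g⁻¹ * B * g : SL(2, K)) : Matrix (Fin 2) (Fin 2) K) with hN
  refine ⟨g, N 1 0, ?_, ?_⟩
  · rw [hconj]
    simp only [mul_fin_two]
    refine congrArg Matrix.of (vec2_eq (vec2_eq ?_ ?_) (vec2_eq ?_ ?_))
    · linear_combination w 1 * hAu0 - w 0 * hAu1 + s * huw
    · linear_combination w 1 * hAw0 - w 0 * hAw1 + huw
    · linear_combination -u 1 * hAu0 + u 0 * hAu1
    · linear_combination -u 1 * hAw0 + u 0 * hAw1 + s⁻¹ * huw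
  · have h01 : N 0 1 = 0 := by
      simp only [N, hconj, mul_fin_two, of_apply, cons_val', cons_val_zero, cons_val_one,
        empty_val', cons_val_fin_one]
      linear_combination w 1 * hBw0 - w 0 * hBw1
    have h11 : N 1 1 = s⁻¹ := by
      simp only [N, hconj, mul_fin_two, of_apply, cons_val', cons_val_one, empty_val',
        cons_val_fin_one]
      linear_combination -u 1 * hBw0 + u 0 * hBw1 + s⁻¹ * huw
    have h00 : N 0 0 = s := by
      have hdet := (g⁻¹ * B * g).prop
      rw [← hN, det_fin_two, h01, h11] at hdet
      field_simp at hdet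
      simpa using hdet
    calc N = !![N 0 0, N 0 1; N 1 0, N 1 1] := eta_fin_two N
      _ = _ := by rw [h00, h01, h11]

theorem exists_conj_eq_normalForm [IsAlgClosed K] (A B : SL(2, K))
    (htr : trace (A : Matrix (Fin 2) (Fin 2) K) = trace (B : Matrix (Fin 2) (Fin 2) K))
    (hirr : ∀ v, A ∈ lineStabilizer v → B ∈ lineStabilizer v → v = 0) :
    ∃ (g : SL(2, K)) (s r : K),
      ((g⁻¹ * A * g : SL(2, K)) : Matrix (Fin 2) (Fin 2) K) = !![s, 1; 0, s⁻¹] ∧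
      ((g⁻¹ * B * g : SL(2, K)) : Matrix (Fin 2) (Fin 2) K) = !![s, 0; r, s⁻¹] := by
  obtain ⟨s, hs, hsA⟩ := exists_add_inv_eq (trace (A : Matrix (Fin 2) (Fin 2) K))
  obtain ⟨w, hw, hBw⟩ := exists_mulVec_eq_smul_of_sq_sub_trace_mul_add_det
    (B : Matrix (Fin 2) (Fin 2) K) (μ := s⁻¹) (by rw [← htr, ← hsA, B.2]; field_simp; ring)
  set u := (A : Matrix (Fin 2) (Fin 2) K) *ᵥ w - s⁻¹ • w
  have hAu : (A : Matrix (Fin 2) (Fin 2) K) *ᵥ u = s • u :=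
    mulVec_mulVec_sub_smul _ hsA (by rw [A.2]; field_simp) w
  have hAw : (A : Matrix (Fin 2) (Fin 2) K) *ᵥ w = u + s⁻¹ • w := (sub_add_cancel _ _).symm
  have hdet : u 0 * w 1 - u 1 * w 0 ≠ 0 := by
    intro h0
    obtain ⟨c, hc⟩ := exists_eq_smul_of_det_eq_zero hw h0
    exact hw (hirr w ⟨c + s⁻¹, by rw [hAw, hc, add_smul]⟩ ⟨s⁻¹, hBw⟩)
  obtain ⟨c, hc⟩ := IsAlgClosed.exists_eq_mul_self (u 0 * w 1 - u 1 * w 0)⁻¹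
  have hc' : c * c * (u 0 * w 1 - u 1 * w 0) = 1 := by rw [← hc, inv_mul_cancel₀ hdet]
  obtain ⟨g, r, hA, hB⟩ := exists_conj_eq_normalForm_of_basis A B hs (u := c • u) (w := c • w)
    (by simp only [Pi.smul_apply, smul_eq_mul]; linear_combination hc')
    (by rw [mulVec_smul, hAu, smul_comm])
    (by rw [mulVec_smul, hAw, smul_add, smul_comm])
    (by rw [mulVec_smul, hBw, smul_comm])
  exact ⟨g, s, r, hA, hB⟩

def fig8y : FigEightGroup := PresentedGroup.of 1

def fig8w : FigEightGroup := fig8y⁻¹ * fig8m * fig8y * fig8m⁻¹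

theorem fig8m_mul_fig8w : fig8m * fig8w = fig8w * fig8y := by
  have hR := PresentedGroup.one_of_mem (rels := figEightRels) (Set.mem_singleton _)
  simp only [map_mul, map_inv] at hR
  change fig8m * fig8y⁻¹ * fig8m⁻¹ * fig8y * fig8m * fig8y⁻¹ * fig8m * fig8y * fig8m⁻¹ *
    fig8y⁻¹ = 1 at hR
  calc fig8m * fig8w
      = fig8w * (fig8m * fig8y⁻¹ * fig8m⁻¹ * fig8y * fig8m * fig8y⁻¹ * fig8m * fig8y * fig8m⁻¹ *
          fig8y⁻¹) * fig8y := by simp only [fig8w]; group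
    _ = fig8w * fig8y := by rw [hR, mul_one]

theorem trace_fig8y {n R : Type*} [Fintype n] [DecidableEq n] [CommRing R]
    (ρ : FigEightGroup →* Matrix.SpecialLinearGroup n R) :
    trace (ρ fig8y : Matrix n n R) = trace (ρ fig8m : Matrix n n R) := by
  rw [← inv_mul_cancel_left fig8w fig8y, ← fig8m_mul_fig8w, ← mul_assoc, map_mul, map_mul, map_inv,
    trace_coe_inv_mul_mul]

theorem trace_fig8l_of_normalForm (ρ : FigEightGroup →* SL(2, K)) {s r : K}
    (hm : (ρ fig8m : Matrix (Fin 2) (Fin 2) K) = !![s, 1; 0, s⁻¹])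
    (hy : (ρ fig8y : Matrix (Fin 2) (Fin 2) K) = !![s, 0; r, s⁻¹]) :
    trace (ρ fig8l : Matrix (Fin 2) (Fin 2) K) =
      trace (ρ fig8m : Matrix (Fin 2) (Fin 2) K) ^ 4 -
      5 * trace (ρ fig8m : Matrix (Fin 2) (Fin 2) K) ^ 2 + 2 := by
  have hs : s ≠ 0 := by
    rintro rfl
    simpa [hm] using (ρ fig8m).2
  have hriley : r ^ 2 + ((s + s⁻¹) ^ 2 - 5) * (r - 1) = 0 := by
    have h := congrArg (fun γ => (ρ γ : Matrix (Fin 2) (Fin 2) K) 0 1) fig8m_mul_fig8w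
    simp only [fig8w, map_mul, map_inv, Matrix.SpecialLinearGroup.coe_mul,
      Matrix.SpecialLinearGroup.coe_inv, hm, hy, adjugate_fin_two_of, mul_fin_two, of_apply,
      cons_val', cons_val_zero, cons_val_one, empty_val', cons_val_fin_one] at h
    field_simp at h
    field_simp
    linear_combination h
  have hl : fig8l = fig8y * fig8m⁻¹ * fig8y⁻¹ * fig8m * fig8m * fig8y⁻¹ * fig8m⁻¹ * fig8y := rfl
  have htr : trace (ρ fig8l : Matrix (Fin 2) (Fin 2) K) = (s + s⁻¹) ^ 4 - 5 * (s + s⁻¹) ^ 2 + 2 +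
      (r + 1) * (s + s⁻¹) ^ 2 * (r ^ 2 + ((s + s⁻¹) ^ 2 - 5) * (r - 1)) := by
    simp only [hl, map_mul, map_inv, Matrix.SpecialLinearGroup.coe_mul,
      Matrix.SpecialLinearGroup.coe_inv, hm, hy, adjugate_fin_two_of, mul_fin_two, trace_fin_two_of]
    field_simp
    ring
  rw [htr, hriley, hm, trace_fin_two_of]
  ring

/-- Trace identity tr ρ(l) = tr⁴ρ(m) − 5 tr²ρ(m) + 2 for irreducible
representations of the figure-eight knot group into SL(2,ℂ). -/
theorem fig8_trace_identity
    (ρ : FigEightGroup →* Matrix.SpecialLinearGroup (Fin 2) ℂ)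
    (hirr : ¬ ∃ w : Fin 2 → ℂ, w ≠ 0 ∧ ∀ γ : FigEightGroup,
      ∃ c : ℂ, (ρ γ : Matrix (Fin 2) (Fin 2) ℂ).mulVec w = c • w) :
    Matrix.trace ((ρ fig8l : Matrix (Fin 2) (Fin 2) ℂ)) =
      Matrix.trace ((ρ fig8m : Matrix (Fin 2) (Fin 2) ℂ)) ^ 4 -
      5 * Matrix.trace ((ρ fig8m : Matrix (Fin 2) (Fin 2) ℂ)) ^ 2 + 2 := by
  have hgen : ∀ v, ρ fig8m ∈ lineStabilizer v → ρ fig8y ∈ lineStabilizer v → v = 0 := by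
    intro v hm hy
    by_contra hv
    refine hirr ⟨v, hv, fun γ => PresentedGroup.generated_by _ ((lineStabilizer v).comap ρ) ?_ γ⟩
    intro j
    fin_cases j
    exacts [hm, hy]
  obtain ⟨g, s, r, hm, hy⟩ := exists_conj_eq_normalForm _ _ (trace_fig8y ρ).symm hgen
  have hconj : ∀ γ, (MulAut.conj g⁻¹).toMonoidHom.comp ρ γ = g⁻¹ * ρ γ * g := fun γ => by simp
  have h := trace_fig8l_of_normalForm ((MulAut.conj g⁻¹).toMonoidHom.comp ρ)
    (by rwa [hconj]) (by rwa [hconj])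
  simpa only [hconj, trace_coe_inv_mul_mul] using h
end

section
/- Let ρ : Γ → SL(2,ℂ) be defined on the figure-eight knot group Γ = ⟨x, y | x y⁻¹ x⁻¹ y x y⁻¹ x y x⁻¹ y⁻¹⟩ by ρ(x) = [[1,1],[0,1]] and ρ(y) = [[1,0],[(1-i√3)/2, 1]]. Then ρ is a well-defined group homomorphism, i.e. ρ(x)ρ(y)⁻¹ρ(x)⁻¹ρ(y)ρ(x)ρ(y)⁻¹ρ(x)ρ(y)ρ(x)⁻¹ρ(y)⁻¹ = I₂. -/
open Matrix

/-!
Writing `a = x y⁻¹ x⁻¹ y`, the figure-eight relator is `(a x)(y a)⁻¹`, so the relation says that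
`a` conjugates the meridian `x` to the meridian `y`. For the parabolic matrices `x = [[1,1],[0,1]]`
and `y = [[1,0],[w,1]]` the two sides of `a x = y a` differ by multiples of `w² - w + 1`, which
vanishes at the primitive sixth root of unity `w = (1 - i√3)/2`.
-/

theorem figureEight_relator_eq_one_iff {G : Type*} [Group G] (x y : G) :
    x * y⁻¹ * x⁻¹ * y * x * y⁻¹ * x * y * x⁻¹ * y⁻¹ = 1 ↔
      x * y⁻¹ * x⁻¹ * y * x = y * (x * y⁻¹ * x⁻¹ * y) := by
  rw [← mul_inv_eq_one (a := x * y⁻¹ * x⁻¹ * y * x)]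
  simp only [_root_.mul_inv_rev, inv_inv, mul_assoc]

section Unipotent

variable {R : Type*} [CommRing R]

theorem inv_upper_unipotent (t : R) :
    (!![1, t; 0, 1] : Matrix (Fin 2) (Fin 2) R)⁻¹ = !![1, -t; 0, 1] :=
  inv_eq_right_inv (by simp [one_fin_two])

theorem inv_lower_unipotent (t : R) :
    (!![1, 0; t, 1] : Matrix (Fin 2) (Fin 2) R)⁻¹ = !![1, 0; -t, 1] :=
  inv_eq_right_inv (by simp [one_fin_two])

theorem figureEight_unipotent_conj_of_sq_sub_add_one {w : R} (hw : w ^ 2 - w + 1 = 0) :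
    (!![1, 1; 0, 1] * !![1, 0; -w, 1] * !![1, -1; 0, 1] * !![1, 0; w, 1] * !![1, 1; 0, 1] :
        Matrix (Fin 2) (Fin 2) R) =
      !![1, 0; w, 1] * (!![1, 1; 0, 1] * !![1, 0; -w, 1] * !![1, -1; 0, 1] * !![1, 0; w, 1]) := by
  ext i j
  fin_cases i <;> fin_cases j <;> simp
  · linear_combination hw
  · linear_combination w * hw
  · ring

end Unipotent

theorem Complex.one_sub_I_mul_sqrt_three_div_two_sq_sub_add_one :
    ((1 - I * Real.sqrt 3) / 2 : ℂ) ^ 2 - (1 - I * Real.sqrt 3) / 2 + 1 = 0 := by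
  have hs : ((Real.sqrt 3 : ℝ) : ℂ) ^ 2 = 3 := by
    norm_cast
    simp
  linear_combination I ^ 2 / 4 * hs + 3 / 4 * I_sq

/-- The assignment x ↦ [[1,1],[0,1]], y ↦ [[1,0],[(1-i√3)/2,1]] gives a well-defined
representation of the figure-eight knot group into SL(2,ℂ): both matrices have
determinant 1 and the relator maps to the identity. -/
theorem fig8_holonomy_well_defined :
    let X : Matrix (Fin 2) (Fin 2) ℂ := !![1, 1; 0, 1]
    let Y : Matrix (Fin 2) (Fin 2) ℂ := !![1, 0; (1 - Complex.I * Real.sqrt 3) / 2, 1]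
    X.det = 1 ∧ Y.det = 1 ∧
    X * Y⁻¹ * X⁻¹ * Y * X * Y⁻¹ * X * Y * X⁻¹ * Y⁻¹ = 1 := by
  intro X Y
  have hX : X.det = 1 := by simp [X, det_fin_two_of]
  have hY : Y.det = 1 := by simp [Y, det_fin_two_of]
  refine ⟨hX, hY, ?_⟩
  obtain ⟨u, hu⟩ : IsUnit X := (isUnit_iff_isUnit_det X).mpr (hX ▸ isUnit_one)
  obtain ⟨v, hv⟩ : IsUnit Y := (isUnit_iff_isUnit_det Y).mpr (hY ▸ isUnit_one)
  rw [← hu, ← hv]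
  simp only [← coe_units_inv, ← Units.val_mul, Units.val_eq_one, figureEight_relator_eq_one_iff]
  ext1
  simp only [Units.val_mul, coe_units_inv, hu, hv, X, Y, inv_upper_unipotent, inv_lower_unipotent]
  exact figureEight_unipotent_conj_of_sq_sub_add_one
    Complex.one_sub_I_mul_sqrt_three_div_two_sq_sub_add_one
end
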